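/- arXiv:1704.08932 — 3 statements merged into one kernel-verified Lean document; each statement's English description precedes it below -/
import Mathlib

section
/- Let α, τ, ξ be real numbers with 1/2 ≤ α < 1, 0 < ξ < 1/4 and 1+α ≤ τ < 2. Then −π < arg T_s ≤ −π/2 and −π/2 < arg T_B < 0, where arg denotes the principal argument with values in (−π, π]. In particular arg T_s ≠ arg T_B. -/
/-- The term `T_s` of the generalised Fredholm symbol on the segment `Γ₁`. -/
noncomputable def Ts (α τ ξ : ℝ) : ℂ :=
  Complex.sin ((Real.pi : ℂ) * (1 - (τ : ℂ) + (α : ℂ) - Complex.I * (ξ : ℂ))) /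
    Complex.sin ((Real.pi : ℂ) * (1 - (τ : ℂ) + 2 * (α : ℂ) - Complex.I * (ξ : ℂ)))

/-- The term `T_B` of the generalised Fredholm symbol on the segment `Γ₁`. -/
noncomputable def TB (α τ ξ : ℝ) : ℂ :=
  Complex.sin ((Real.pi : ℂ) * (α : ℂ)) / (Real.pi : ℂ) *
      Complex.Gamma ((τ : ℂ) - 2 * (α : ℂ) + 1 + Complex.I * (ξ : ℂ)) *
      Complex.Gamma (2 * (α : ℂ)) /
    Complex.Gamma ((τ : ℂ) + 1 + Complex.I * (ξ : ℂ))

/-!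
Write `T_s = sin z / sin w` with `Im z = Im w = -πξ` and `Re z - Re w = -πα`. Then
`Re (sin z * conj (sin w)) = sin (Re z) sin (Re w) + sinh² (πξ) cos (πα) ≤ 0` and
`Im (sin z * conj (sin w)) = -sinh (πξ) cosh (πξ) sin (πα) < 0`, which places `arg T_s` in
`(-π, -π/2]`.

By `Γ(s) Γ(t) = Γ(s + t) B(s, t)`, `T_B` is a positive multiple of `B(x + iξ, y)` with `x ∈ (1, 2]`,
`y ∈ [1, 2)`, and `B(x + iξ, y) = ∫₀¹ t^(x-1) (1-t)^(y-1) e^(iξ log t) dt`. The real part of the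
integrand is nonnegative once `ξ log t ≥ -π/2`, and minus its imaginary part once `ξ log t ≥ -π`;
both fail only on an interval `(0, c)` of exponentially small length `c`, where they are still
`≥ -1`, while on `[1/4, 1/2]` both are bounded below by explicit constants that outweigh `c`.
-/

open Real Set MeasureTheory intervalIntegral ComplexConjugate

theorem integral_zero_one_pos_of_bounds {f : ℝ → ℝ} {c a b m : ℝ}
    (hf : IntervalIntegrable f volume 0 1) (hc : 0 ≤ c) (hca : c ≤ a) (hab : a ≤ b) (hb : b ≤ 1)
    (hcm : c < m * (b - a)) (h_near_zero : ∀ t ∈ Ioo 0 c, -1 ≤ f t)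
    (h_nonneg : ∀ t ∈ Ioo c 1, 0 ≤ f t) (h_mid : ∀ t ∈ Ioo a b, m ≤ f t) :
    0 < ∫ t in 0..1, f t := by
  have hsub {p q : ℝ} (hp : 0 ≤ p) (hpq : p ≤ q) (hq : q ≤ 1) : IntervalIntegrable f volume p q :=
    hf.mono_set (by rw [uIcc_of_le hpq, uIcc_of_le zero_le_one]; exact Icc_subset_Icc hp hq)
  have h₁ : -c ≤ ∫ t in 0..c, f t := by
    simpa using integral_mono_on_of_le_Ioo hc intervalIntegrable_const
      (hsub le_rfl hc (by linarith)) h_near_zero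
  have h₂ : 0 ≤ ∫ t in c..a, f t := by
    simpa using integral_mono_on_of_le_Ioo hca intervalIntegrable_const (hsub hc hca (by linarith))
      fun t ht => h_nonneg t ⟨ht.1, by linarith [ht.2]⟩
  have h₃ : m * (b - a) ≤ ∫ t in a..b, f t := by
    have := integral_mono_on_of_le_Ioo hab intervalIntegrable_const (hsub (by linarith) hab hb)
      h_mid
    rwa [intervalIntegral.integral_const, smul_eq_mul, mul_comm] at this
  have h₄ : 0 ≤ ∫ t in b..1, f t := by
    simpa using integral_mono_on_of_le_Ioo hb intervalIntegrable_const
      (hsub (by linarith) hb le_rfl)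
      fun t ht => h_nonneg t ⟨by linarith [ht.1], ht.2⟩
  rw [← integral_add_adjacent_intervals (hsub le_rfl (by linarith) (by linarith))
      (hsub (by linarith) hb le_rfl),
    ← integral_add_adjacent_intervals (hsub le_rfl (by linarith) (by linarith))
      (hsub (by linarith) hab hb),
    ← integral_add_adjacent_intervals (hsub le_rfl hc (by linarith)) (hsub hc hca (by linarith))]
  linarith

theorem rpow_mul_one_sub_rpow_nonneg {x y t : ℝ} (ht₀ : 0 ≤ t) (ht₁ : t ≤ 1) :
    0 ≤ t ^ (x - 1) * (1 - t) ^ (y - 1) :=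
  mul_nonneg (rpow_nonneg ht₀ _) (rpow_nonneg (by linarith) _)

theorem neg_one_le_rpow_mul_one_sub_rpow_mul {x y t s : ℝ} (hx : 1 ≤ x) (hy : 1 ≤ y) (ht₀ : 0 ≤ t)
    (ht₁ : t ≤ 1) (hs : -1 ≤ s) : -1 ≤ t ^ (x - 1) * (1 - t) ^ (y - 1) * s := by
  have hg₀ := rpow_mul_one_sub_rpow_nonneg (x := x) (y := y) ht₀ ht₁
  have hg₁ : t ^ (x - 1) * (1 - t) ^ (y - 1) ≤ 1 :=
    mul_le_one₀ (rpow_le_one ht₀ ht₁ (by linarith)) (rpow_nonneg (by linarith) _)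
      (rpow_le_one (by linarith) (by linarith) (by linarith))
  nlinarith

theorem mul_one_sub_le_rpow_mul_one_sub_rpow {x y t : ℝ} (hx : x ≤ 2) (hy : y ≤ 2) (ht₀ : 0 ≤ t)
    (ht₁ : t ≤ 1) : t * (1 - t) ≤ t ^ (x - 1) * (1 - t) ^ (y - 1) :=
  mul_le_mul (self_le_rpow_of_le_one ht₀ ht₁ (by linarith))
    (self_le_rpow_of_le_one (by linarith) (by linarith) (by linarith)) (by linarith)
    (rpow_nonneg ht₀ _)

theorem Real.neg_three_le_log_and_log_le_neg_half {t : ℝ} (ht : t ∈ Ioo (1 / 4 : ℝ) (1 / 2)) :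
    -3 ≤ Real.log t ∧ Real.log t ≤ -(1 / 2) := by
  obtain ⟨ht₀, ht₁⟩ := ht
  have := one_sub_inv_le_log_of_pos (x := t) (by linarith)
  have := log_le_sub_one_of_pos (x := t) (by linarith)
  have : t⁻¹ < 4 := by rw [inv_lt_comm₀ (by linarith) (by norm_num)]; linarith
  constructor <;> linarith

theorem neg_lt_mul_log_of_exp_neg_div_lt {K ξ t : ℝ} (hξ : 0 < ξ) (ht : 0 < t)
    (h : rexp (-(K / ξ)) < t) : -K < ξ * Real.log t := by
  have := (lt_log_iff_exp_lt ht).2 h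
  rwa [← neg_div, div_lt_iff₀ hξ, mul_comm] at this

namespace Complex
theorem re_sin_mul_conj_sin {z w : ℂ} (h : z.im = w.im) :
    (sin z * conj (sin w)).re =
      Real.sin z.re * Real.sin w.re + Real.sinh z.im ^ 2 * Real.cos (z.re - w.re) := by
  rw [sin_eq z, sin_eq w, ← h]
  simp only [← ofReal_sin, ← ofReal_cos, ← ofReal_cosh, ← ofReal_sinh, map_add, map_mul,
    conj_ofReal, conj_I, mul_re, mul_im, add_re, add_im, ofReal_re, ofReal_im, I_re, I_im, neg_re,
    neg_im]
  rw [Real.cos_sub]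
  linear_combination (Real.sin z.re * Real.sin w.re) * Real.cosh_sq z.im

theorem im_sin_mul_conj_sin {z w : ℂ} (h : z.im = w.im) :
    (sin z * conj (sin w)).im = Real.sinh z.im * Real.cosh z.im * Real.sin (w.re - z.re) := by
  rw [sin_eq z, sin_eq w, ← h]
  simp only [← ofReal_sin, ← ofReal_cos, ← ofReal_cosh, ← ofReal_sinh, map_add, map_mul,
    conj_ofReal, conj_I, mul_re, mul_im, add_re, add_im, ofReal_re, ofReal_im, I_re, I_im, neg_re,
    neg_im]
  rw [Real.sin_sub]
  ring

theorem arg_div_eq_arg_mul_conj (z : ℂ) {w : ℂ} (hw : w ≠ 0) : arg (z / w) = arg (z * conj w) := by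
  rw [div_eq_mul_inv, inv_def, ← mul_assoc, arg_mul_real (inv_pos.2 (normSq_pos.2 hw))]

theorem arg_le_neg_pi_div_two_of_re_nonpos_of_im_neg {z : ℂ} (hre : z.re ≤ 0) (him : z.im < 0) :
    arg z ≤ -(π / 2) := by
  rw [← not_lt, neg_pi_div_two_lt_arg_iff]
  push Not
  exact ⟨hre, him⟩

theorem ofReal_cpow_add_mul_I_sub_one_mul {x y ξ t : ℝ} (ht₀ : 0 < t) (ht₁ : t ≤ 1) :
    (t : ℂ) ^ ((x : ℂ) + ξ * I - 1) * (1 - (t : ℂ)) ^ ((y : ℂ) - 1) =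
      ((t ^ (x - 1) * (1 - t) ^ (y - 1) : ℝ) : ℂ) * exp ((ξ * Real.log t : ℝ) * I) := by
  have ht : (t : ℂ) ≠ 0 := ofReal_ne_zero.2 ht₀.ne'
  rw [show (x : ℂ) + ξ * I - 1 = ((x - 1 : ℝ) : ℂ) + ξ * I by push_cast; ring, cpow_add _ _ ht,
    ← ofReal_cpow ht₀.le, show 1 - (t : ℂ) = ((1 - t : ℝ) : ℂ) by push_cast; ring,
    show (y : ℂ) - 1 = ((y - 1 : ℝ) : ℂ) by push_cast; ring, ← ofReal_cpow (by linarith),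
    cpow_def_of_ne_zero ht, ← ofReal_log ht₀.le]
  push_cast
  ring_nf

theorem betaIntegrand_re {x y ξ t : ℝ} (ht₀ : 0 < t) (ht₁ : t ≤ 1) :
    ((t : ℂ) ^ ((x : ℂ) + ξ * I - 1) * (1 - (t : ℂ)) ^ ((y : ℂ) - 1)).re =
      t ^ (x - 1) * (1 - t) ^ (y - 1) * Real.cos (ξ * Real.log t) := by
  rw [ofReal_cpow_add_mul_I_sub_one_mul ht₀ ht₁, re_ofReal_mul, exp_ofReal_mul_I_re]

theorem betaIntegrand_im {x y ξ t : ℝ} (ht₀ : 0 < t) (ht₁ : t ≤ 1) :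
    ((t : ℂ) ^ ((x : ℂ) + ξ * I - 1) * (1 - (t : ℂ)) ^ ((y : ℂ) - 1)).im =
      t ^ (x - 1) * (1 - t) ^ (y - 1) * Real.sin (ξ * Real.log t) := by
  rw [ofReal_cpow_add_mul_I_sub_one_mul ht₀ ht₁, im_ofReal_mul, exp_ofReal_mul_I_im]

variable {x y ξ : ℝ}

theorem intervalIntegrable_betaIntegrand (hx : 0 < x) (hy : 0 < y) :
    IntervalIntegrable
      (fun t : ℝ => (t : ℂ) ^ ((x : ℂ) + ξ * I - 1) * (1 - (t : ℂ)) ^ ((y : ℂ) - 1)) volume 0 1 :=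
  betaIntegral_convergent (by simpa) (by simpa)

theorem betaIntegral_re_pos (hx₁ : 1 ≤ x) (hx₂ : x ≤ 2) (hy₁ : 1 ≤ y) (hy₂ : y ≤ 2) (hξ : 0 < ξ)
    (hξ' : ξ ≤ 1 / 4) : 0 < (betaIntegral (x + ξ * I) y).re := by
  have hF := intervalIntegrable_betaIntegrand (ξ := ξ) (by linarith : 0 < x) (by linarith : 0 < y)
  have hc : rexp (-(π / (2 * ξ))) < 1 / 32 := by
    have h6 : 6 ≤ π / (2 * ξ) := by rw [le_div_iff₀ (by linarith)]; nlinarith [pi_gt_three]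
    have h216 := pow_le_pow_left₀ (by norm_num) h6 3
    have := pow_div_factorial_le_exp (by linarith) 3 (x := π / (2 * ξ))
    rw [Real.exp_neg]
    apply inv_lt_of_inv_lt₀ (by norm_num)
    norm_num [Nat.factorial] at this ⊢
    linarith
  have hre := intervalIntegral_re hF
  simp only [RCLike.re_to_complex] at hre
  rw [betaIntegral, ← hre]
  refine integral_zero_one_pos_of_bounds (c := rexp (-(π / (2 * ξ)))) (a := 1 / 4) (b := 1 / 2)
    (m := 1 / 8) ⟨hF.1.re, hF.2.re⟩ (exp_pos _).le (by linarith) (by norm_num) (by norm_num)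
    (by linarith) ?_ ?_ ?_
  · intro t ⟨ht₀, htc⟩
    rw [betaIntegrand_re ht₀ (by linarith)]
    exact neg_one_le_rpow_mul_one_sub_rpow_mul hx₁ hy₁ ht₀.le (by linarith) (neg_one_le_cos _)
  · intro t ⟨hct, ht₁⟩
    have ht₀ : 0 < t := (exp_pos _).trans hct
    rw [betaIntegrand_re ht₀ ht₁.le]
    have hlog := neg_lt_mul_log_of_exp_neg_div_lt hξ ht₀ (by rwa [← div_div] at hct)
    have hlog' : Real.log t ≤ 0 := log_nonpos ht₀.le ht₁.le
    exact mul_nonneg (rpow_mul_one_sub_rpow_nonneg ht₀.le ht₁.le)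
      (cos_nonneg_of_neg_pi_div_two_le_of_le hlog.le (by nlinarith [pi_pos]))
  · intro t ht
    rw [betaIntegrand_re (by linarith [ht.1]) (by linarith [ht.2])]
    obtain ⟨hlog, hlog'⟩ := neg_three_le_log_and_log_le_neg_half ht
    have hg := mul_one_sub_le_rpow_mul_one_sub_rpow hx₂ hy₂ (t := t) (by linarith [ht.1])
      (by linarith [ht.2])
    have hcos : 23 / 32 ≤ Real.cos (ξ * Real.log t) := by
      have := one_sub_sq_div_two_le_cos (x := ξ * Real.log t)
      have : -(3 / 4) ≤ ξ * Real.log t := by nlinarith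
      have : ξ * Real.log t ≤ 0 := by nlinarith
      nlinarith
    calc (1 / 8 : ℝ) ≤ 3 / 16 * (23 / 32) := by norm_num
      _ ≤ _ := mul_le_mul (by nlinarith [ht.1, ht.2]) hcos (by norm_num)
        (rpow_mul_one_sub_rpow_nonneg (by linarith [ht.1]) (by linarith [ht.2]))

theorem betaIntegral_im_neg (hx₁ : 1 ≤ x) (hx₂ : x ≤ 2) (hy₁ : 1 ≤ y) (hy₂ : y ≤ 2) (hξ : 0 < ξ)
    (hξ' : ξ ≤ 1 / 4) : (betaIntegral (x + ξ * I) y).im < 0 := by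
  have hF := intervalIntegrable_betaIntegrand (ξ := ξ) (by linarith : 0 < x) (by linarith : 0 < y)
  have hc : rexp (-(π / ξ)) < ξ / 128 := by
    have h12 : 12 ≤ π / ξ := by rw [le_div_iff₀ hξ]; nlinarith [pi_gt_three]
    have h1728 := pow_le_pow_left₀ (by norm_num) h12 3
    have := pow_div_factorial_le_exp (by linarith) 4 (x := π / ξ)
    have hπξ : π / ξ * ξ = π := div_mul_cancel₀ π hξ.ne'
    rw [Real.exp_neg]
    apply inv_lt_of_inv_lt₀ (by positivity)
    rw [inv_div, div_lt_iff₀ hξ]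
    norm_num [Nat.factorial] at this ⊢
    nlinarith [pi_gt_three]
  have him := intervalIntegral_im hF
  simp only [RCLike.im_to_complex] at him
  rw [betaIntegral, ← him, ← neg_pos, ← intervalIntegral.integral_neg]
  refine integral_zero_one_pos_of_bounds (c := rexp (-(π / ξ))) (a := 1 / 4) (b := 1 / 2)
    (m := ξ / 32) ⟨hF.1.im.neg, hF.2.im.neg⟩ (exp_pos _).le (by linarith) (by norm_num)
    (by norm_num) (by linarith) ?_ ?_ ?_
  · intro t ⟨ht₀, htc⟩
    rw [betaIntegrand_im ht₀ (by linarith), ← mul_neg]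
    exact neg_one_le_rpow_mul_one_sub_rpow_mul hx₁ hy₁ ht₀.le (by linarith)
      (by linarith [sin_le_one (ξ * Real.log t)])
  · intro t ⟨hct, ht₁⟩
    have ht₀ : 0 < t := (exp_pos _).trans hct
    rw [betaIntegrand_im ht₀ ht₁.le, ← mul_neg]
    have hlog := neg_lt_mul_log_of_exp_neg_div_lt hξ ht₀ hct
    have hlog' : Real.log t ≤ 0 := log_nonpos ht₀.le ht₁.le
    exact mul_nonneg (rpow_mul_one_sub_rpow_nonneg ht₀.le ht₁.le)
      (neg_nonneg.2 (sin_nonpos_of_nonpos_of_neg_pi_le (by nlinarith) hlog.le))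
  · intro t ht
    rw [betaIntegrand_im (by linarith [ht.1]) (by linarith [ht.2]), ← mul_neg, ← Real.sin_neg]
    obtain ⟨hlog, hlog'⟩ := neg_three_le_log_and_log_le_neg_half ht
    have hg := mul_one_sub_le_rpow_mul_one_sub_rpow hx₂ hy₂ (t := t) (by linarith [ht.1])
      (by linarith [ht.2])
    have hsin : ξ / 4 ≤ Real.sin (-(ξ * Real.log t)) := by
      set v := -(ξ * Real.log t)
      have hv₀ : ξ / 2 ≤ v := by nlinarith
      have hv₁ : v ≤ 3 / 4 := by nlinarith
      have hv₃ : v ^ 3 ≤ 3 * v := by nlinarith [mul_le_mul hv₁ hv₁ (by linarith) (by norm_num)]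
      linarith [sin_gt_sub_cube (x := v) (by linarith)]
    calc ξ / 32 = 1 / 8 * (ξ / 4) := by ring
      _ ≤ _ := mul_le_mul (by nlinarith [ht.1, ht.2]) hsin (by positivity)
        (rpow_mul_one_sub_rpow_nonneg (by linarith [ht.1]) (by linarith [ht.2]))

end Complex

open Complex in
theorem arg_Ts_le_neg_pi_div_two {α τ ξ : ℝ} (hα : 1 / 2 ≤ α) (hα' : α < 1) (hξ : 0 < ξ)
    (hτ : 1 + α ≤ τ) (hτ' : τ < 2) : arg (Ts α τ ξ) ≤ -(π / 2) := by
  set z : ℂ := π * (1 - τ + α - I * ξ)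
  set w : ℂ := π * (1 - τ + 2 * α - I * ξ)
  have hz : z.re = π * (1 - τ + α) ∧ z.im = -(π * ξ) := by simp [z]
  have hw : w.re = π * (1 - τ + 2 * α) ∧ w.im = -(π * ξ) := by simp [w]
  have him : (sin z * conj (sin w)).im < 0 := by
    rw [im_sin_mul_conj_sin (hz.2.trans hw.2.symm), hz.1, hw.1, hz.2, Real.sinh_neg, Real.cosh_neg,
      show π * (1 - τ + 2 * α) - π * (1 - τ + α) = π * α by ring]
    have hsin : 0 < Real.sin (π * α) :=
      Real.sin_pos_of_pos_of_lt_pi (by nlinarith [pi_pos]) (by nlinarith [pi_pos])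
    have hsinh : 0 < Real.sinh (π * ξ) := Real.sinh_pos_iff.2 (by positivity)
    linarith [mul_pos (mul_pos hsinh (Real.cosh_pos (π * ξ))) hsin]
  have hsinw : sin w ≠ 0 := fun h => by simp [h] at him
  unfold Ts
  rw [arg_div_eq_arg_mul_conj _ hsinw]
  refine arg_le_neg_pi_div_two_of_re_nonpos_of_im_neg ?_ him
  rw [re_sin_mul_conj_sin (hz.2.trans hw.2.symm), hz.1, hw.1]
  have h1 : Real.sin (π * (1 - τ + α)) ≤ 0 :=
    Real.sin_nonpos_of_nonpos_of_neg_pi_le (by nlinarith [pi_pos]) (by nlinarith [pi_pos])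
  have h2 : 0 ≤ Real.sin (π * (1 - τ + 2 * α)) :=
    Real.sin_nonneg_of_nonneg_of_le_pi (by nlinarith [pi_pos]) (by nlinarith [pi_pos])
  have h3 : Real.cos (π * (1 - τ + α) - π * (1 - τ + 2 * α)) ≤ 0 := by
    rw [show π * (1 - τ + α) - π * (1 - τ + 2 * α) = -(π * α) by ring, Real.cos_neg]
    exact Real.cos_nonpos_of_pi_div_two_le_of_le (by nlinarith [pi_pos]) (by nlinarith [pi_pos])
  exact add_nonpos (mul_nonpos_of_nonpos_of_nonneg h1 h2)
    (mul_nonpos_of_nonneg_of_nonpos (sq_nonneg _) h3)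

theorem TB_eq_mul_betaIntegral {α τ ξ : ℝ} (hα : 0 < α) (hτ : 2 * α - 1 < τ) :
    TB α τ ξ = ((Real.sin (π * α) / π : ℝ) : ℂ) *
      Complex.betaIntegral ((τ - 2 * α + 1 : ℝ) + ξ * Complex.I) ((2 * α : ℝ) : ℂ) := by
  set s : ℂ := (τ - 2 * α + 1 : ℝ) + ξ * Complex.I
  set t : ℂ := ((2 * α : ℝ) : ℂ)
  have hs : 0 < s.re := by simp [s]; linarith
  have ht : 0 < t.re := by simp [t]; linarith
  have hΓ : Complex.Gamma (s + t) ≠ 0 :=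
    Complex.Gamma_ne_zero_of_re_pos (by rw [Complex.add_re]; linarith)
  rw [TB, show (τ : ℂ) - 2 * α + 1 + Complex.I * ξ = s by push_cast [s]; ring,
    show 2 * (α : ℂ) = t by push_cast [t]; ring,
    show (τ : ℂ) + 1 + Complex.I * ξ = s + t by push_cast [s, t]; ring,
    mul_assoc _ (Complex.Gamma s), Complex.Gamma_mul_Gamma_eq_betaIntegral hs ht, mul_div_assoc,
    mul_div_cancel_left₀ _ hΓ]
  norm_cast

theorem arg_TB_mem_Ioo {α τ ξ : ℝ} (hα : 1 / 2 ≤ α) (hα' : α < 1) (hξ : 0 < ξ) (hξ' : ξ < 1 / 4)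
    (hτ : 1 + α ≤ τ) (hτ' : τ < 2) : Complex.arg (TB α τ ξ) ∈ Ioo (-(π / 2)) 0 := by
  have hr : 0 < Real.sin (π * α) / π :=
    div_pos (sin_pos_of_pos_of_lt_pi (by nlinarith [pi_pos]) (by nlinarith [pi_pos])) pi_pos
  rw [TB_eq_mul_betaIntegral (by linarith) (by linarith), Complex.arg_real_mul _ hr]
  exact ⟨Complex.neg_pi_div_two_lt_arg_iff.2 <| Or.inl <| Complex.betaIntegral_re_pos
      (by linarith) (by linarith) (by linarith) (by linarith) hξ hξ'.le,
    Complex.arg_neg_iff.2 <| Complex.betaIntegral_im_neg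
      (by linarith) (by linarith) (by linarith) (by linarith) hξ hξ'.le⟩

/-- For `1/2 ≤ α < 1`, `0 < ξ < 1/4` and `1+α ≤ τ < 2`, one has
`−π < arg T_s ≤ −π/2 < arg T_B < 0` (principal argument); in particular
`arg T_s ≠ arg T_B`. -/
theorem arg_Ts_le_neg_pi_div_two_lt_arg_TB
    (α τ ξ : ℝ) (hα : 1 / 2 ≤ α) (hα' : α < 1) (hξ : 0 < ξ) (hξ' : ξ < 1 / 4)
    (hτ : 1 + α ≤ τ) (hτ' : τ < 2) :
    (-Real.pi < Complex.arg (Ts α τ ξ) ∧ Complex.arg (Ts α τ ξ) ≤ -(Real.pi / 2)) ∧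
      (-(Real.pi / 2) < Complex.arg (TB α τ ξ) ∧ Complex.arg (TB α τ ξ) < 0) ∧
      Complex.arg (Ts α τ ξ) ≠ Complex.arg (TB α τ ξ) := by
  have hTs := arg_Ts_le_neg_pi_div_two hα hα' hξ hτ hτ'
  have hTB := arg_TB_mem_Ioo hα hα' hξ hξ' hτ hτ'
  exact ⟨⟨Complex.neg_pi_lt_arg _, hTs⟩, hTB, fun h => (h ▸ hTs).not_gt hTB.1⟩
end

section
/- Let γ, σ, ξ be real numbers with 0 < γ < 1, σ > 0 and ξ > 0. Then −π/2 < arg( Γ(σ+iξ) · Γ(γ) / Γ(σ+γ+iξ) ) < 0, where arg denotes the principal argument with values in (−π, π]. -/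
/-!
By Gauss's product formula, `Γ(s) / Γ(s + γ) = lim n ^ (-γ) ∏_{j ≤ n} (s + γ + j) / (s + j)`.
For `s = σ + iξ` in the open first quadrant, `x ↦ arg (s + x)` decreases on `x ≥ 0`, so for
`0 < γ ≤ 1` the sum of the arguments `arg (s + γ + j) - arg (s + j)` of the factors is at most its
first term `arg (s + γ) - arg s < 0` and, by comparison with the telescoping sum of
`arg (s + j + 1) - arg (s + j)`, at least `-arg s > -π/2`. Hence all the partial products lie in one
closed sector strictly inside the open fourth quadrant, and so does their nonzero limit.
Multiplying by `Γ(γ) > 0` does not change the argument.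
-/

open Complex Filter Topology Finset

lemma pos_of_tendsto_of_mul_norm_le {ι E : Type*} [SeminormedAddCommGroup E] {l : Filter ι}
    [l.NeBot] {u : ι → E} {x : E} {g : E → ℝ} {c : ℝ} (hu : Tendsto u l (𝓝 x)) (hg : Continuous g)
    (hc : 0 < c) (hx : 0 < ‖x‖) (h : ∀ᶠ i in l, c * ‖u i‖ ≤ g (u i)) : 0 < g x :=
  (mul_pos hc hx).trans_le <|
    le_of_tendsto_of_tendsto ((continuous_const.mul continuous_norm).continuousAt.tendsto.comp hu)
      (hg.continuousAt.tendsto.comp hu) h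

lemma AntitoneOn.sum_range_sub_mem_Icc {f : ℝ → ℝ} (hf : AntitoneOn f (Set.Ici 0)) {γ : ℝ}
    (hγ : 0 ≤ γ) (hγ' : γ ≤ 1) (n : ℕ) :
    f (n + 1) - f 0 ≤ ∑ j ∈ range (n + 1), (f (γ + j) - f j) ∧
      ∑ j ∈ range (n + 1), (f (γ + j) - f j) ≤ f γ - f 0 := by
  have hle : ∀ x y : ℝ, 0 ≤ x → x ≤ y → f y ≤ f x := fun x y hx hxy =>
    hf (Set.mem_Ici.2 hx) (Set.mem_Ici.2 (hx.trans hxy)) hxy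
  constructor
  · calc f (n + 1) - f 0 = ∑ j ∈ range (n + 1), (f (j + 1) - f j) := by
          simpa using (sum_range_sub (fun j : ℕ => f j) (n + 1)).symm
      _ ≤ _ := sum_le_sum fun j _ => by
          gcongr; exact hle _ _ (by positivity) (by linarith)
  · rw [sum_range_succ']
    simp only [Nat.cast_zero, add_zero, add_le_iff_nonpos_left]
    exact sum_nonpos fun j _ => sub_nonpos.2 <| hle _ _ (by positivity) (by linarith)

namespace Complex

lemma arg_eq_arctan_of_re_pos {z : ℂ} (hz : 0 < z.re) : arg z = Real.arctan (z.im / z.re) := by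
  have h := abs_lt.1 (abs_arg_lt_pi_div_two_iff.2 (Or.inl hz))
  rw [← tan_arg, Real.arctan_tan h.1 h.2]

lemma strictAntiOn_arg_add_ofReal {z : ℂ} (hz : 0 < z.im) :
    StrictAntiOn (fun x : ℝ => arg (z + x)) (Set.Ioi (-z.re)) := by
  intro x (hx : -z.re < x) y (hy : -z.re < y) hxy
  have hre : ∀ x : ℝ, (z + x).re = z.re + x := fun x => by simp
  have hx' : 0 < (z + x).re := by rw [hre]; linarith
  have hy' : 0 < (z + y).re := by rw [hre]; linarith
  show arg (z + y) < arg (z + x)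
  rw [arg_eq_arctan_of_re_pos hx', arg_eq_arctan_of_re_pos hy']
  refine Real.arctan_strictMono (div_lt_div_of_pos_left (by simpa using hz) hx' ?_)
  rw [hre, hre]; linarith

/-- In exponential form the imaginary part of the exponent is the sum of the arguments of the
factors, not reduced mod `2π`. -/
lemma GammaSeq_div_GammaSeq_eq_exp {s t : ℂ} {n : ℕ} (hn : n ≠ 0) (hs : ∀ j : ℕ, s + j ≠ 0)
    (ht : ∀ j : ℕ, t + j ≠ 0) :
    GammaSeq s n / GammaSeq t n =
      exp (log n * (s - t) + ∑ j ∈ range (n + 1), (log (t + j) - log (s + j))) := by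
  have hn' : (n : ℂ) ≠ 0 := Nat.cast_ne_zero.2 hn
  have hprod : ∀ u : ℂ, (∀ j : ℕ, u + j ≠ 0) →
      ∏ j ∈ range (n + 1), (u + j) = exp (∑ j ∈ range (n + 1), log (u + j)) := fun u hu => by
    rw [exp_sum]; exact prod_congr rfl fun j _ => (exp_log (hu j)).symm
  rw [GammaSeq, GammaSeq, hprod s hs, hprod t ht, cpow_def_of_ne_zero hn',
    cpow_def_of_ne_zero hn', sum_sub_distrib, exp_add, exp_sub, mul_sub, exp_sub]
  have : (n.factorial : ℂ) ≠ 0 := by exact_mod_cast n.factorial_ne_zero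
  field_simp

lemma cos_mul_norm_exp_le_exp_re {z : ℂ} {a : ℝ} (hz : |z.im| ≤ a) (ha : a ≤ Real.pi) :
    Real.cos a * ‖exp z‖ ≤ (exp z).re := by
  rw [exp_re, norm_exp, mul_comm]
  gcongr
  rw [← Real.cos_abs z.im]
  exact Real.cos_le_cos_of_nonneg_of_le_pi (abs_nonneg _) ha hz

lemma sin_mul_norm_exp_le_neg_exp_im {z : ℂ} {b : ℝ} (hb : -(Real.pi / 2) ≤ b)
    (hz : b ≤ -z.im) (hz' : -z.im ≤ Real.pi / 2) :
    Real.sin b * ‖exp z‖ ≤ -(exp z).im := by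
  rw [exp_im, norm_exp, mul_comm, ← mul_neg, ← Real.sin_neg]
  gcongr
  exact Real.sin_le_sin_of_le_of_le_pi_div_two hb hz' hz

lemma sum_arg_add_sub_arg_mem_Icc {s : ℂ} (hs : 0 < s.re) (hs' : 0 < s.im) {γ : ℝ}
    (hγ : 0 ≤ γ) (hγ' : γ ≤ 1) (n : ℕ) :
    -arg s ≤ ∑ j ∈ range (n + 1), (arg (s + γ + j) - arg (s + j)) ∧
      ∑ j ∈ range (n + 1), (arg (s + γ + j) - arg (s + j)) ≤ arg (s + γ) - arg s := by
  have hanti : AntitoneOn (fun x : ℝ => arg (s + x)) (Set.Ici 0) :=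
    (strictAntiOn_arg_add_ofReal hs').antitoneOn.mono fun x (hx : 0 ≤ x) => by
      simp only [Set.mem_Ioi]; linarith
  have h := hanti.sum_range_sub_mem_Icc hγ hγ' n
  have hnonneg : 0 ≤ arg (s + ((n + 1 : ℝ) : ℂ)) := arg_nonneg_iff.2 (by simpa using hs'.le)
  simp only [ofReal_add, ofReal_natCast, ofReal_zero, add_zero, ← add_assoc] at h hnonneg
  constructor <;> linarith [h.1, h.2]

lemma re_pos_and_im_neg_of_tendsto_exp {ι : Type*} {l : Filter ι} [l.NeBot] {w : ι → ℂ} {L : ℂ}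
    {a b : ℝ} (h : Tendsto (fun i => exp (w i)) l (𝓝 L)) (hL : L ≠ 0) (hb : 0 < b)
    (ha : a < Real.pi / 2) (hw : ∀ᶠ i in l, -a ≤ (w i).im ∧ (w i).im ≤ -b) :
    0 < L.re ∧ L.im < 0 := by
  obtain ⟨i, hi⟩ := hw.exists
  have hL' : 0 < ‖L‖ := norm_pos_iff.2 hL
  have hre := pos_of_tendsto_of_mul_norm_le h continuous_re
    (Real.cos_pos_of_mem_Ioo ⟨by linarith, ha⟩) hL' <| hw.mono fun i hi =>
      cos_mul_norm_exp_le_exp_re (abs_le.2 ⟨hi.1, by linarith⟩) (by linarith)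
  have him := pos_of_tendsto_of_mul_norm_le (g := fun z => -z.im) h continuous_im.neg
    (Real.sin_pos_of_pos_of_lt_pi hb (by linarith)) hL' <| hw.mono fun i hi =>
      sin_mul_norm_exp_le_neg_exp_im (by linarith) (by linarith) (by linarith)
  exact ⟨hre, neg_pos.1 him⟩

lemma arg_Gamma_div_Gamma_add_mem_Ioo {s : ℂ} (hs : 0 < s.re) (hs' : 0 < s.im) {γ : ℝ}
    (hγ : 0 < γ) (hγ' : γ ≤ 1) :
    -(Real.pi / 2) < arg (Gamma s / Gamma (s + γ)) ∧ arg (Gamma s / Gamma (s + γ)) < 0 := by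
  set t := s + γ
  have ht : 0 < t.re := by simp only [t, add_re, ofReal_re]; linarith
  have hne : ∀ u : ℂ, 0 < u.re → ∀ j : ℕ, u + j ≠ 0 := fun u hu j h => by
    have : 0 < (u + j).re := by simp only [add_re, natCast_re]; positivity
    rw [h, zero_re] at this
    exact lt_irrefl 0 this
  set w : ℕ → ℂ := fun n => log n * (s - t) + ∑ j ∈ range (n + 1), (log (t + j) - log (s + j))
  have hw : ∀ n, (w n).im = ∑ j ∈ range (n + 1), (arg (s + γ + j) - arg (s + j)) := fun n => by
    simp [w, t, log_im]
  have hseq : ∀ᶠ n in atTop, GammaSeq s n / GammaSeq t n = exp (w n) :=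
    eventually_atTop.2 ⟨1, fun n hn => GammaSeq_div_GammaSeq_eq_exp (by omega) (hne s hs) (hne t ht)⟩
  have hlim : Tendsto (fun n => exp (w n)) atTop (𝓝 (Gamma s / Gamma t)) :=
    ((GammaSeq_tendsto_Gamma s).div (GammaSeq_tendsto_Gamma t)
      (Gamma_ne_zero_of_re_pos ht)).congr' hseq
  have hA : arg s < Real.pi / 2 := (abs_lt.1 (abs_arg_lt_pi_div_two_iff.2 (Or.inl hs))).2
  have hd : arg t < arg s := by
    simpa [t] using strictAntiOn_arg_add_ofReal hs' (Set.mem_Ioi.2 (neg_neg_of_pos hs))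
      (Set.mem_Ioi.2 (by linarith)) hγ
  obtain ⟨hre, him⟩ := re_pos_and_im_neg_of_tendsto_exp hlim
    (div_ne_zero (Gamma_ne_zero_of_re_pos hs) (Gamma_ne_zero_of_re_pos ht)) (sub_pos.2 hd) hA
    (Eventually.of_forall fun n => by
      rw [hw, neg_sub]; exact sum_arg_add_sub_arg_mem_Icc hs hs' hγ.le hγ' n)
  exact ⟨neg_pi_div_two_lt_arg_iff.2 (Or.inl hre), arg_neg_iff.2 him⟩

end Complex

/-- For `0 < γ < 1`, `σ > 0` and `ξ > 0`, the principal argument of the Beta function value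
`B(σ+iξ, γ) = Γ(σ+iξ)·Γ(γ)/Γ(σ+γ+iξ)` lies strictly between `−π/2` and `0`. -/
theorem arg_Beta_mem_Ioo
    (γ σ ξ : ℝ) (hγ : 0 < γ) (hγ' : γ < 1) (hσ : 0 < σ) (hξ : 0 < ξ) :
    -(Real.pi / 2) < Complex.arg (Complex.Gamma ((σ : ℂ) + Complex.I * (ξ : ℂ)) *
        Complex.Gamma (γ : ℂ) / Complex.Gamma ((σ : ℂ) + (γ : ℂ) + Complex.I * (ξ : ℂ))) ∧
      Complex.arg (Complex.Gamma ((σ : ℂ) + Complex.I * (ξ : ℂ)) * Complex.Gamma (γ : ℂ) /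
        Complex.Gamma ((σ : ℂ) + (γ : ℂ) + Complex.I * (ξ : ℂ))) < 0 := by
  set s : ℂ := σ + I * ξ
  have hB : Gamma s * Gamma γ / Gamma (σ + γ + I * ξ) =
      (Real.Gamma γ : ℂ) * (Gamma s / Gamma (s + γ)) := by
    rw [Gamma_ofReal, show (σ : ℂ) + γ + I * ξ = s + γ by ring]
    ring
  rw [hB, arg_real_mul _ (Real.Gamma_pos_of_pos hγ)]
  exact arg_Gamma_div_Gamma_add_mem_Ioo (by simpa [s] using hσ) (by simpa [s] using hξ) hγ hγ'.le
end

section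
/- Let α, σ, ξ be real numbers with 0 < α < 1/2, σ ≥ 1−α and 0 < ξ < 1/4. Then −π/2 < −4αξ < arg( Γ(σ+iξ) · Γ(2α) / Γ(σ+2α+iξ) ) < 0, where arg denotes the principal argument with values in (−π, π]. -/
/-!
By Gauss's product formula, `B(z, 2α) = Γ(2α) · lim n^(-2α) ∏_{j ≤ n} (z + 2α + j) / (z + j)`
with `z = σ + iξ`. The `j`-th factor has argument in `[-2αξ / ((σ + j)(σ + j + 2α)), 0)`, and
these lower bounds sum to at most `θ = 2αξ (1 / (1 - α²) + 2/3) < 4αξ < π/2`. Hence the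
arguments of the partial products simply add up, so every partial product lies in the closed
sector `-θ ≤ arg ≤ arg (first factor) < 0`; positive real factors and the limit keep `B` there.
-/

open Real Complex Finset Filter Topology

namespace Complex

def sector (a b : ℝ) : Set ℂ := insert 0 (arg ⁻¹' Set.Icc a b)

theorem arg_eq_arctan_of_re_pos_s12 {u : ℂ} (hre : 0 < u.re) :
    arg u = Real.arctan (u.im / u.re) := by
  have h := abs_lt.1 (abs_arg_lt_pi_div_two_iff.2 (Or.inl hre))
  rw [← tan_arg, Real.arctan_tan h.1 h.2]

theorem mem_sector_iff {a b : ℝ} (ha : -(π / 2) < a) (hab : a ≤ b) (hb : b < π / 2) {u : ℂ} :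
    u ∈ sector a b ↔
      0 ≤ u.re ∧ Real.tan a * u.re ≤ u.im ∧ u.im ≤ Real.tan b * u.re := by
  rcases eq_or_ne u 0 with rfl | hu
  · simp [sector]
  rw [sector, Set.mem_insert_iff, or_iff_right hu, Set.mem_preimage, Set.mem_Icc]
  constructor
  · rintro ⟨hau, hub⟩
    have hre : 0 < u.re := by
      have : |arg u| < π / 2 := abs_lt.2 ⟨by linarith, by linarith⟩
      simpa [hu] using abs_arg_lt_pi_div_two_iff.1 this
    have htan_a : Real.tan a ≤ u.im / u.re := tan_arg u ▸
      strictMonoOn_tan.monotoneOn ⟨ha, by linarith⟩ ⟨by linarith, by linarith⟩ hau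
    have htan_b : u.im / u.re ≤ Real.tan b := tan_arg u ▸
      strictMonoOn_tan.monotoneOn ⟨by linarith, by linarith⟩ ⟨by linarith, hb⟩ hub
    exact ⟨hre.le, (le_div_iff₀ hre).1 htan_a, (div_le_iff₀ hre).1 htan_b⟩
  · rintro ⟨hre, hau, hub⟩
    have hre : 0 < u.re := hre.lt_of_ne fun h ↦ hu <| by
      rw [← h, mul_zero] at hau hub
      exact Complex.ext h.symm (le_antisymm hub hau)
    rw [arg_eq_arctan_of_re_pos_s12 hre, ← Real.arctan_tan ha (by linarith),
      ← Real.arctan_tan (by linarith) hb]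
    exact ⟨arctan_strictMono.monotone ((le_div_iff₀ hre).2 hau),
      arctan_strictMono.monotone ((div_le_iff₀ hre).2 hub)⟩

theorem isClosed_sector {a b : ℝ} (ha : -(π / 2) < a) (hab : a ≤ b) (hb : b < π / 2) :
    IsClosed (sector a b) := by
  rw [show sector a b = _ from Set.ext fun u ↦ mem_sector_iff ha hab hb]
  exact (isClosed_le continuous_const continuous_re).inter
    ((isClosed_le (continuous_const.mul continuous_re) continuous_im).inter
      (isClosed_le continuous_im (continuous_const.mul continuous_re)))

theorem ofReal_mul_mem_sector {a b r : ℝ} (hr : 0 ≤ r) {u : ℂ} (hu : u ∈ sector a b) :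
    (r : ℂ) * u ∈ sector a b := by
  rcases hr.eq_or_lt with rfl | hr
  · simp [sector]
  rcases hu with rfl | hu
  · simp [sector]
  exact Or.inr (by rwa [Set.mem_preimage, arg_real_mul u hr])

theorem div_le_arg_of_re_pos_of_im_neg {u : ℂ} (hre : 0 < u.re) (him : u.im < 0) :
    u.im / u.re ≤ arg u := by
  have h := abs_lt.1 (abs_arg_lt_pi_div_two_iff.2 (Or.inl hre))
  have := Real.le_tan (neg_nonneg.2 (arg_neg_iff.2 him).le) (by linarith)
  rw [Real.tan_neg, tan_arg] at this
  linarith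

theorem arg_add_ofReal_div_self_mem {z : ℂ} {t : ℝ} (hx : 0 < z.re) (hy : 0 < z.im)
    (ht : 0 < t) :
    arg ((z + t) / z) ∈ Set.Ico (-(t * z.im / (z.re * (z.re + t)))) 0 := by
  have hn : 0 < normSq z := normSq_pos.2 fun h ↦ by simp [h] at hx
  have hre : ((z + t) / z).re = (z.re * (z.re + t) + z.im ^ 2) / normSq z := by
    simp only [div_re, add_re, ofReal_re, add_im, ofReal_im, add_zero]
    ring
  have him : ((z + t) / z).im = -(t * z.im) / normSq z := by
    simp only [div_im, add_im, ofReal_im, add_zero, add_re, ofReal_re]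
    ring
  have hre_pos : 0 < ((z + t) / z).re := by rw [hre]; positivity
  have him_neg : ((z + t) / z).im < 0 := by
    rw [him]; exact div_neg_of_neg_of_pos (by nlinarith) hn
  refine ⟨le_trans ?_ (div_le_arg_of_re_pos_of_im_neg hre_pos him_neg), arg_neg_iff.2 him_neg⟩
  rw [hre, him, div_div_div_cancel_right₀ hn.ne', neg_div, neg_le_neg_iff]
  exact div_le_div_of_nonneg_left (by positivity) (by positivity) (by nlinarith)

theorem arg_prod_range_eq_sum {f : ℕ → ℂ} (hneg : ∀ j, arg (f j) < 0)
    (hsum : ∀ n, -π < ∑ j ∈ range n, arg (f j)) (n : ℕ) :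
    arg (∏ j ∈ range n, f j) = ∑ j ∈ range n, arg (f j) := by
  have hf (j : ℕ) : f j ≠ 0 := fun h ↦ by simpa [h] using hneg j
  induction n with
  | zero => simp
  | succ n ih =>
    have hprod : ∏ j ∈ range n, f j ≠ 0 := prod_ne_zero_iff.2 fun j _ ↦ hf j
    have hmem : arg (∏ j ∈ range n, f j) + arg (f n) ∈ Set.Ioc (-π) π := by
      rw [ih, ← sum_range_succ]
      exact ⟨hsum _, (sum_nonpos fun j _ ↦ (hneg j).le).trans pi_pos.le⟩
    rw [prod_range_succ, sum_range_succ, arg_mul hprod (hf n) hmem, ih]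

theorem prod_range_succ_mem_sector {f : ℕ → ℂ} {θ : ℝ} (hθ : θ < π / 2)
    (hneg : ∀ j, arg (f j) < 0) (hsum : ∀ n, -θ ≤ ∑ j ∈ range n, arg (f j)) (n : ℕ) :
    ∏ j ∈ range (n + 1), f j ∈ sector (-θ) (arg (f 0)) := by
  refine Or.inr ?_
  rw [Set.mem_preimage, arg_prod_range_eq_sum hneg fun n ↦ by linarith [hsum n, pi_pos]]
  refine ⟨hsum _, ?_⟩
  rw [sum_range_succ']
  linarith [sum_nonpos fun j (_ : j ∈ range n) ↦ (hneg (j + 1)).le]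

theorem GammaSeq_div_GammaSeq_add (z w : ℂ) {n : ℕ} (hn : n ≠ 0) :
    GammaSeq z n / GammaSeq (z + w) n =
      (n : ℂ) ^ (-w) * ∏ j ∈ range (n + 1), (z + w + j) / (z + j) := by
  have hn' : (n : ℂ) ≠ 0 := Nat.cast_ne_zero.2 hn
  have hfact : (n.factorial : ℂ) ≠ 0 := Nat.cast_ne_zero.2 n.factorial_ne_zero
  have hpow : (n : ℂ) ^ z ≠ 0 := cpow_ne_zero_iff.2 (Or.inl hn')
  rw [GammaSeq, GammaSeq, prod_div_distrib, cpow_add _ _ hn', cpow_neg]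
  field_simp

theorem arg_Gamma_mul_Gamma_div_mem_Icc {z : ℂ} {t a b : ℝ} (hz : 0 < z.re) (ht : 0 < t)
    (ha : -(π / 2) < a) (hab : a ≤ b) (hb : b < π / 2)
    (h : ∀ n : ℕ, ∏ j ∈ range (n + 1), (z + t + j) / (z + j) ∈ sector a b) :
    arg (Gamma z * Gamma t / Gamma (z + t)) ∈ Set.Icc a b := by
  have hzt : Gamma (z + t) ≠ 0 := Gamma_ne_zero_of_re_pos (by rw [add_re, ofReal_re]; linarith)
  have hB : Gamma z * Gamma t / Gamma (z + t) ≠ 0 :=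
    div_ne_zero (mul_ne_zero (Gamma_ne_zero_of_re_pos hz)
      (Gamma_ne_zero_of_re_pos (by simpa using ht))) hzt
  have hlim : Tendsto (fun n ↦ Gamma t * (GammaSeq z n / GammaSeq (z + t) n)) atTop
      (𝓝 (Gamma z * Gamma t / Gamma (z + t))) := by
    rw [mul_comm (Gamma z), mul_div_assoc]
    exact ((GammaSeq_tendsto_Gamma z).div (GammaSeq_tendsto_Gamma _) hzt).const_mul _
  have hmem : ∀ᶠ n : ℕ in atTop,
      Gamma t * (GammaSeq z n / GammaSeq (z + t) n) ∈ sector a b := by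
    filter_upwards [eventually_ne_atTop 0] with n hn
    rw [GammaSeq_div_GammaSeq_add z t hn, ← mul_assoc, Gamma_ofReal,
      ← ofReal_natCast, ← ofReal_neg, ← ofReal_cpow n.cast_nonneg, ← ofReal_mul]
    exact ofReal_mul_mem_sector
      (mul_nonneg (Real.Gamma_pos_of_pos ht).le (by positivity)) (h n)
  exact ((isClosed_sector ha hab hb).mem_of_tendsto hlim hmem).resolve_left hB

end Complex

-- `(σ + j)(σ + j + 2α) ≥ (j + 1)² - α²`, which is `1 - α²` at `j = 0` and at least
-- `(j + 1/2)(j + 3/2)` afterwards, where the bound telescopes.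
theorem sum_range_one_div_mul_le {α σ : ℝ} (hα : 0 ≤ α) (hα' : α < 1 / 2) (hσ : 1 - α ≤ σ)
    (n : ℕ) :
    ∑ j ∈ range n, 1 / ((σ + j) * (σ + j + 2 * α)) ≤ 1 / (1 - α ^ 2) + 2 / 3 := by
  have hα2 : 0 < 1 - α ^ 2 := by nlinarith
  rcases n with _ | n
  · simp only [range_zero, sum_empty]
    positivity
  have hfirst : 1 / (σ * (σ + 2 * α)) ≤ 1 / (1 - α ^ 2) :=
    one_div_le_one_div_of_le (by nlinarith) (by nlinarith)
  have htail : ∑ j ∈ range n, 1 / ((σ + ↑(j + 1)) * (σ + ↑(j + 1) + 2 * α)) ≤ 2 / 3 := by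
    calc _ ≤ ∑ j ∈ range n, (1 / ((j : ℝ) + 3 / 2) - 1 / (((j + 1 : ℕ) : ℝ) + 3 / 2)) := by
          refine sum_le_sum fun j _ ↦ ?_
          have hj : (0 : ℝ) ≤ j := j.cast_nonneg
          rw [div_sub_div _ _ (by positivity) (by positivity)]
          push_cast
          rw [div_le_div_iff₀ (by nlinarith) (by positivity)]
          nlinarith
      _ = 2 / 3 - 1 / ((n : ℝ) + 3 / 2) := by
          rw [sum_range_sub' (fun j : ℕ ↦ 1 / ((j : ℝ) + 3 / 2))]
          norm_num
      _ ≤ 2 / 3 := sub_le_self _ (by positivity)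
  rw [sum_range_succ', Nat.cast_zero, add_zero]
  linarith

/-- For `0 < α < 1/2`, `σ ≥ 1−α` and `0 < ξ < 1/4`, one has
`−π/2 < −4αξ < arg B(σ+iξ, 2α) < 0`, where
`B(σ+iξ, 2α) = Γ(σ+iξ)·Γ(2α)/Γ(σ+2α+iξ)` and `arg` is the principal argument. -/
theorem arg_Beta_gt_neg_four_alpha_xi
    (α σ ξ : ℝ) (hα : 0 < α) (hα' : α < 1 / 2) (hσ : 1 - α ≤ σ)
    (hξ : 0 < ξ) (hξ' : ξ < 1 / 4) :
    -(Real.pi / 2) < -4 * α * ξ ∧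
      -4 * α * ξ < Complex.arg (Complex.Gamma ((σ : ℂ) + Complex.I * (ξ : ℂ)) *
        Complex.Gamma (2 * (α : ℂ)) /
        Complex.Gamma ((σ : ℂ) + 2 * (α : ℂ) + Complex.I * (ξ : ℂ))) ∧
      Complex.arg (Complex.Gamma ((σ : ℂ) + Complex.I * (ξ : ℂ)) *
        Complex.Gamma (2 * (α : ℂ)) /
        Complex.Gamma ((σ : ℂ) + 2 * (α : ℂ) + Complex.I * (ξ : ℂ))) < 0 := by
  set z : ℂ := σ + I * ξ
  have hre (j : ℕ) : (z + j).re = σ + j := by simp [z]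
  have him (j : ℕ) : (z + j).im = ξ := by simp [z]
  set f : ℕ → ℂ := fun j ↦ (z + (2 * α : ℝ) + j) / (z + j)
  have hθ : 2 * α * ξ * (1 / (1 - α ^ 2) + 2 / 3) < 4 * α * ξ := by
    have : 1 / (1 - α ^ 2) < 4 / 3 := by
      rw [div_lt_div_iff₀ (by nlinarith) (by norm_num)]; nlinarith
    calc _ < 2 * α * ξ * (4 / 3 + 2 / 3) := by gcongr
      _ = 4 * α * ξ := by ring
  set θ := 2 * α * ξ * (1 / (1 - α ^ 2) + 2 / 3)
  have hσ0 : 0 < σ := by linarith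
  have hαξ : 4 * α * ξ < π / 2 := by nlinarith [pi_gt_three]
  have hf (j : ℕ) : arg (f j) ∈ Set.Ico (-(2 * α * ξ / ((σ + j) * (σ + j + 2 * α)))) 0 := by
    have := arg_add_ofReal_div_self_mem (z := z + j) (t := 2 * α)
      (by rw [hre]; exact add_pos_of_pos_of_nonneg hσ0 j.cast_nonneg)
      (by rwa [him]) (by positivity)
    rwa [hre, him, add_right_comm z (j : ℂ)] at this
  have hsum (n : ℕ) : -θ ≤ ∑ j ∈ range n, arg (f j) := by
    calc -θ ≤ -(2 * α * ξ * ∑ j ∈ range n, 1 / ((σ + j) * (σ + j + 2 * α))) :=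
          neg_le_neg (mul_le_mul_of_nonneg_left (sum_range_one_div_mul_le hα.le hα' hσ n)
            (by positivity))
      _ ≤ _ := by
          simp only [mul_sum, mul_one_div, ← sum_neg_distrib]
          exact sum_le_sum fun j _ ↦ (hf j).1
  have key := arg_Gamma_mul_Gamma_div_mem_Icc (z := z) (t := 2 * α) (a := -θ) (b := arg (f 0))
    (by simpa [z] using hσ0) (by positivity) (by linarith) (by simpa using hsum 1)
    (by linarith [(hf 0).2, pi_pos])
    (prod_range_succ_mem_sector (by linarith) (fun j ↦ (hf j).2) hsum)
  rw [show (σ : ℂ) + 2 * α + I * ξ = z + (2 * α : ℝ) by push_cast; ring,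
    show 2 * (α : ℂ) = (2 * α : ℝ) by push_cast; ring]
  exact ⟨by linarith, by linarith [key.1], key.2.trans_lt (hf 0).2⟩
end
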